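/- arXiv:1610.06359 — 3 statements merged into one kernel-verified Lean document; each statement's English description precedes it below -/
import Mathlib

section
/- For every integer q ≥ 2 there exists a constant C > 0 such that for every integer k ≥ 2, every integer n ≥ C·k·ln k, every q-colouring φ of the edges of the complete graph on [n], and every tuple (ρ_1, …, ρ_q) ∈ (0,1)^q with ρ_1 + ⋯ + ρ_q = 1, there exist a colour j ∈ [q] and a set S ⊆ [n] of size ℓ ≥ k such that the graph induced by S in colour j has minimum degree at least ρ_j(ℓ−1). -/
/-!
Call `2 e_j(S) - ρ_j |S| (|S| - 1)` the discrepancy of `S` in colour `j`, where `e_j(S)` counts the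
`j`-coloured edges inside `S`; the discrepancies of a set over all colours sum to `0`. Assume no set
of size at least `k` is dense in any colour. A colour and subset `(j, T)` of maximum discrepancy
among subsets of `U` is dense in colour `j`, since deleting a vertex of small degree would increase
the discrepancy; hence `|T| < k` and the maximum is below `k²`. On the other hand the maximum grows
with `U`: greedily peel off `q (2q + 4)` maximising blocks, each of discrepancy at least `2^m` by
induction. Some `2q + 4` of them share a colour `c`, maximality of each block makes its cross term
with every later block at most `-2^m`, and the discrepancy of their union in colour `c` is at least
`-(q - 1)` times the maximum. This forces the maximum over `U` up to `2^(m+1)`, which contradicts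
the bound `k²` as soon as `2^m > k²`, i.e. for `|U|` of order `q² k log k`.
-/

open Finset

namespace QuasiRamsey

variable {V κ : Type*} [DecidableEq V] [DecidableEq κ] (φ : Finset V → κ) (ρ : κ → ℝ)

def colorDegree (j : κ) (S : Finset V) (v : V) : ℕ := #{u ∈ S | u ≠ v ∧ φ {u, v} = j}

def crossEdges (j : κ) (A B : Finset V) : ℕ := ∑ a ∈ A, colorDegree φ j B a

/-- `crossEdges φ j S S` counts every `j`-edge inside `S` twice. -/
def discrepancy (j : κ) (S : Finset V) : ℝ := crossEdges φ j S S - ρ j * (#S * (#S - 1))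

def crossDiscrepancy (j : κ) (A B : Finset V) : ℝ :=
  2 * crossEdges φ j A B - 2 * ρ j * #A * #B

def IsDense (j : κ) (S : Finset V) : Prop :=
  ∀ v ∈ S, ρ j * ((#S : ℝ) - 1) ≤ (colorDegree φ j S v : ℝ)

def IsMaxDiscrepancy (U : Finset V) (j : κ) (T : Finset V) : Prop :=
  T ⊆ U ∧ ∀ i S, S ⊆ U → discrepancy φ ρ i S ≤ discrepancy φ ρ j T

section Counting

variable {φ} (j : κ)

lemma colorDegree_union {B C : Finset V} (h : Disjoint B C) (v : V) :
    colorDegree φ j (B ∪ C) v = colorDegree φ j B v + colorDegree φ j C v := by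
  rw [colorDegree, filter_union, card_union_of_disjoint (disjoint_filter_filter h)]
  rfl

lemma colorDegree_biUnion {ι : Type*} {J : Finset ι} {B : ι → Finset V}
    (h : (J : Set ι).PairwiseDisjoint B) (v : V) :
    colorDegree φ j (J.biUnion B) v = ∑ l ∈ J, colorDegree φ j (B l) v := by
  rw [colorDegree, filter_biUnion, card_biUnion]
  · rfl
  · exact fun x hx y hy hxy => disjoint_filter_filter (h hx hy hxy)

lemma colorDegree_erase (S : Finset V) (v : V) :
    colorDegree φ j (S.erase v) v = colorDegree φ j S v := by
  rw [colorDegree, colorDegree, filter_erase, erase_eq_of_notMem]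
  simp

lemma colorDegree_singleton {u v : V} (huv : u ≠ v) : colorDegree φ (φ {u, v}) {v} u = 1 := by
  simp [colorDegree, filter_singleton, huv.symm, pair_comm]

lemma crossEdges_comm (A B : Finset V) : crossEdges φ j A B = crossEdges φ j B A := by
  simp only [crossEdges, colorDegree, card_filter]
  rw [sum_comm]
  refine sum_congr rfl fun b _ => sum_congr rfl fun a _ => ?_
  simp only [ne_comm]
  rw [pair_comm]

lemma crossEdges_le (A B : Finset V) : crossEdges φ j A B ≤ #A * #B :=
  sum_le_card_nsmul _ _ _ fun _ _ => card_filter_le _ _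

lemma crossEdges_union_left {A B : Finset V} (h : Disjoint A B) (C : Finset V) :
    crossEdges φ j (A ∪ B) C = crossEdges φ j A C + crossEdges φ j B C :=
  sum_union h

lemma crossEdges_union_right (A : Finset V) {B C : Finset V} (h : Disjoint B C) :
    crossEdges φ j A (B ∪ C) = crossEdges φ j A B + crossEdges φ j A C := by
  simp only [crossEdges, colorDegree_union j h, sum_add_distrib]

lemma crossEdges_biUnion_right (A : Finset V) {ι : Type*} {J : Finset ι} {B : ι → Finset V}
    (h : (J : Set ι).PairwiseDisjoint B) :
    crossEdges φ j A (J.biUnion B) = ∑ l ∈ J, crossEdges φ j A (B l) := by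
  simp only [crossEdges, colorDegree_biUnion j h]
  exact sum_comm

lemma sum_colorDegree [Fintype κ] (S : Finset V) (v : V) :
    ∑ j, colorDegree φ j S v = #(S.erase v) := by
  rw [card_eq_sum_card_fiberwise (f := fun u => φ {u, v}) (t := univ) fun _ _ => mem_univ _]
  simp only [colorDegree, filter_erase, ← filter_filter, filter_ne']

end Counting

section Discrepancy

variable {φ ρ} (j : κ)

lemma discrepancy_empty : discrepancy φ ρ j ∅ = 0 := by
  simp [discrepancy, crossEdges]

lemma discrepancy_singleton (v : V) : discrepancy φ ρ j {v} = 0 := by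
  simp [discrepancy, crossEdges, colorDegree, filter_singleton]

lemma discrepancy_union {A B : Finset V} (h : Disjoint A B) :
    discrepancy φ ρ j (A ∪ B) =
      discrepancy φ ρ j A + discrepancy φ ρ j B + crossDiscrepancy φ ρ j A B := by
  simp only [discrepancy, crossDiscrepancy, crossEdges_union_left j h,
    crossEdges_union_right j _ h, crossEdges_comm j B A, card_union_of_disjoint h]
  push_cast
  ring

lemma crossDiscrepancy_biUnion_right (A : Finset V) {ι : Type*} {J : Finset ι}
    {B : ι → Finset V} (h : (J : Set ι).PairwiseDisjoint B) :
    crossDiscrepancy φ ρ j A (J.biUnion B) = ∑ l ∈ J, crossDiscrepancy φ ρ j A (B l) := by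
  simp only [crossDiscrepancy, crossEdges_biUnion_right j A h, card_biUnion h]
  push_cast
  rw [mul_sum, mul_sum, ← sum_sub_distrib]

lemma discrepancy_le_sq (hρ : 0 ≤ ρ j) (S : Finset V) : discrepancy φ ρ j S ≤ #S ^ 2 := by
  have hedges : (crossEdges φ j S S : ℝ) ≤ #S * #S := by exact_mod_cast crossEdges_le j S S
  have hpairs : (0 : ℝ) ≤ #S * (#S - 1) := by
    rcases (#S).eq_zero_or_pos with h | h
    · simp [h]
    · exact mul_nonneg (by positivity) (by simpa using h)
  rw [discrepancy, sq]
  linarith [mul_nonneg hρ hpairs]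

lemma sum_discrepancy [Fintype κ] (hsum : ∑ i, ρ i = 1) (S : Finset V) :
    ∑ j, discrepancy φ ρ j S = 0 := by
  have hedges : ∑ j, (crossEdges φ j S S : ℝ) = #S * (#S - 1) := by
    simp only [crossEdges, Nat.cast_sum]
    rw [sum_comm]
    simp only [← Nat.cast_sum, sum_colorDegree]
    rw [Nat.cast_sum, sum_congr rfl fun v hv => cast_card_erase_of_mem hv, sum_const,
      nsmul_eq_mul]
  simp only [discrepancy, sum_sub_distrib, ← sum_mul, hsum, hedges]
  ring

lemma sub_card_mul_le_discrepancy [Fintype κ] (hsum : ∑ i, ρ i = 1) {S : Finset V} {M : ℝ}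
    (hM : ∀ i, discrepancy φ ρ i S ≤ M) :
    M - Fintype.card κ * M ≤ discrepancy φ ρ j S := by
  have := single_le_sum (f := fun i => M - discrepancy φ ρ i S) (fun i _ => sub_nonneg.2 (hM i))
    (mem_univ j)
  simp only [sum_sub_distrib, sum_const, card_univ, nsmul_eq_mul, sum_discrepancy hsum] at this
  linarith

lemma discrepancy_pair {u v : V} (huv : u ≠ v) :
    discrepancy φ ρ (φ {u, v}) {u, v} = 2 - 2 * ρ (φ {u, v}) := by
  rw [insert_eq, discrepancy_union _ (disjoint_singleton.2 huv), discrepancy_singleton,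
    discrepancy_singleton]
  simp [crossDiscrepancy, crossEdges, colorDegree_singleton huv]

lemma crossDiscrepancy_singleton_erase {S : Finset V} {v : V} (hv : v ∈ S) :
    crossDiscrepancy φ ρ j {v} (S.erase v) = 2 * colorDegree φ j S v - 2 * ρ j * (#S - 1) := by
  simp [crossDiscrepancy, crossEdges, colorDegree_erase, cast_card_erase_of_mem hv]

lemma two_mul_discrepancy_biUnion_le {ι : Type*} [LinearOrder ι] {j : κ} {M δ : ℝ}
    (J : Finset ι) {B : ι → Finset V} (hdisj : (J : Set ι).PairwiseDisjoint B)
    (hM : ∀ a ∈ J, discrepancy φ ρ j (B a) ≤ M)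
    (hcross : ∀ a ∈ J, ∀ l ∈ J, a < l → crossDiscrepancy φ ρ j (B a) (B l) ≤ -δ) :
    2 * discrepancy φ ρ j (J.biUnion B) ≤ 2 * #J * M - #J * (#J - 1) * δ := by
  induction J using Finset.induction_on_min with
  | empty => simp [discrepancy_empty]
  | insert a J hmin ih =>
    have ha : a ∉ J := fun h => (hmin a h).false
    have hJ : (J : Set ι).PairwiseDisjoint B := hdisj.subset (by simp)
    have hdisj_a : Disjoint (B a) (J.biUnion B) := (disjoint_biUnion_right _ _ _).2 fun l hl =>
      hdisj (by simp) (by simp [hl]) (hmin l hl).ne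
    have hcross_a : crossDiscrepancy φ ρ j (B a) (J.biUnion B) ≤ #J * (-δ) := by
      rw [crossDiscrepancy_biUnion_right j _ hJ]
      simpa using sum_le_card_nsmul J _ (-δ) fun l hl =>
        hcross a (mem_insert_self a J) l (mem_insert_of_mem hl) (hmin l hl)
    have hJ_bound := ih hJ (fun l hl => hM l (mem_insert_of_mem hl))
      (fun x hx y hy => hcross x (mem_insert_of_mem hx) y (mem_insert_of_mem hy))
    have ha_bound := hM a (mem_insert_self a J)
    rw [biUnion_insert, discrepancy_union j hdisj_a, card_insert_of_notMem ha]
    push_cast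
    nlinarith

end Discrepancy

lemma eq_of_half_lt_of_half_lt [Fintype κ] {ρ : κ → ℝ} (hρ : ∀ i, 0 < ρ i)
    (hsum : ∑ i, ρ i = 1) {a b : κ} (ha : 1 / 2 < ρ a) (hb : 1 / 2 < ρ b) : a = b := by
  by_contra hab
  have := sum_le_sum_of_subset_of_nonneg (subset_univ {a, b}) fun i _ _ => (hρ i).le
  rw [sum_pair hab, hsum] at this
  linarith

section Maximum

variable {φ ρ}

lemma isDense_of_isMaxDiscrepancy {U T : Finset V} {j : κ}
    (h : IsMaxDiscrepancy φ ρ U j T) : IsDense φ ρ j T := by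
  intro v hv
  have hsplit :=
    discrepancy_union (φ := φ) (ρ := ρ) j (disjoint_singleton_left.2 (notMem_erase v T))
  rw [← insert_eq, insert_erase hv, discrepancy_singleton, crossDiscrepancy_singleton_erase j hv]
    at hsplit
  have := h.2 j (T.erase v) ((erase_subset v T).trans h.1)
  linarith

lemma crossDiscrepancy_le_neg_of_isMaxDiscrepancy {U A B : Finset V} {j : κ}
    (h : IsMaxDiscrepancy φ ρ U j A) (hB : B ⊆ U) (hAB : Disjoint A B) :
    crossDiscrepancy φ ρ j A B ≤ -discrepancy φ ρ j B := by
  have := h.2 j (A ∪ B) (union_subset h.1 hB)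
  rw [discrepancy_union j hAB] at this
  linarith

/-- A pair whose colour has weight at most `1/2` has discrepancy at least `1`; if there is none,
every pair has the unique colour of weight above `1/2`, and `U` is dense in that colour. -/
lemma exists_one_le_discrepancy [Fintype κ] (hρ : ∀ i, 0 < ρ i) (hsum : ∑ i, ρ i = 1)
    {U : Finset V} (hU : 2 ≤ #U) (hsparse : ∀ j, ¬IsDense φ ρ j U) :
    ∃ j, ∃ S ⊆ U, 1 ≤ discrepancy φ ρ j S := by
  by_contra! hsmall
  have hheavy : ∀ u ∈ U, ∀ v ∈ U, u ≠ v → 1 / 2 < ρ (φ {u, v}) := by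
    intro u hu v hv huv
    have := hsmall (φ {u, v}) {u, v} (insert_subset hu (singleton_subset_iff.2 hv))
    rw [discrepancy_pair huv] at this
    linarith
  obtain ⟨u₀, hu₀, v₀, hv₀, huv₀⟩ := one_lt_card.1 hU
  set c := φ {u₀, v₀}
  refine hsparse c fun v hv => ?_
  have hcomplete : colorDegree φ c U v = #(U.erase v) := by
    rw [colorDegree, ← filter_ne']
    congr 1
    ext u
    simp only [mem_filter, and_congr_right_iff, and_iff_left_iff_imp]
    exact fun hu huv => eq_of_half_lt_of_half_lt hρ hsum (hheavy u hu v hv huv)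
      (hheavy u₀ hu₀ v₀ hv₀ huv₀)
  have hc : ρ c ≤ 1 := hsum ▸ single_le_sum (fun i _ => (hρ i).le) (mem_univ c)
  have hU1 : (0 : ℝ) ≤ #U - 1 := by
    rw [sub_nonneg]
    exact_mod_cast (by omega : 1 ≤ #U)
  rw [hcomplete, cast_card_erase_of_mem hv]
  nlinarith

variable (φ ρ) [Fintype κ] [Nonempty κ]

lemma exists_isMaxDiscrepancy (U : Finset V) : ∃ j T, IsMaxDiscrepancy φ ρ U j T := by
  obtain ⟨p, hp, hmax⟩ := exists_max_image (univ ×ˢ U.powerset)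
    (fun p => discrepancy φ ρ p.1 p.2) ⟨(Classical.arbitrary κ, ∅), by simp⟩
  exact ⟨p.1, p.2, mem_powerset.1 (mem_product.1 hp).2,
    fun i S hS => hmax (i, S) (by simpa using hS)⟩

noncomputable def maxColor (U : Finset V) : κ := (exists_isMaxDiscrepancy φ ρ U).choose

noncomputable def maxBlock (U : Finset V) : Finset V :=
  (exists_isMaxDiscrepancy φ ρ U).choose_spec.choose

noncomputable def maxDiscrepancy (U : Finset V) : ℝ :=
  discrepancy φ ρ (maxColor φ ρ U) (maxBlock φ ρ U)

lemma isMaxDiscrepancy_max (U : Finset V) :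
    IsMaxDiscrepancy φ ρ U (maxColor φ ρ U) (maxBlock φ ρ U) :=
  (exists_isMaxDiscrepancy φ ρ U).choose_spec.choose_spec

end Maximum

section Peeling

variable (f : Finset V → Finset V)

def peel (U : Finset V) (l : ℕ) : Finset V := (fun W => W \ f W)^[l] U

lemma peel_succ (U : Finset V) (l : ℕ) : peel f U (l + 1) = peel f U l \ f (peel f U l) :=
  Function.iterate_succ_apply' _ _ _

lemma peel_antitone (U : Finset V) : Antitone (peel f U) :=
  antitone_nat_of_succ_le fun l => by rw [peel_succ]; exact sdiff_subset

variable {f}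

lemma subset_peel_sdiff_of_lt (hf : ∀ W, f W ⊆ W) (U : Finset V) {a l : ℕ} (hal : a < l) :
    f (peel f U l) ⊆ peel f U a \ f (peel f U a) :=
  (hf _).trans (peel_succ f U a ▸ peel_antitone f U hal)

lemma pairwise_disjoint_peel (hf : ∀ W, f W ⊆ W) (U : Finset V) :
    (Set.univ : Set ℕ).PairwiseDisjoint fun l => f (peel f U l) := by
  intro a _ l _ hal
  rcases hal.lt_or_gt with h | h
  · exact disjoint_sdiff.mono_right (subset_peel_sdiff_of_lt hf U h)
  · exact (disjoint_sdiff.mono_right (subset_peel_sdiff_of_lt hf U h)).symm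

lemma card_le_card_peel_add {k : ℕ} (hk : ∀ W, #(f W) ≤ k) (U : Finset V) (l : ℕ) :
    #U ≤ #(peel f U l) + l * k := by
  induction l with
  | zero => simp [peel]
  | succ l ih =>
    have := card_le_card_sdiff_add_card (s := peel f U l) (t := f (peel f U l))
    rw [← peel_succ] at this
    have := hk (peel f U l)
    linarith

end Peeling

section Greedy

variable [Fintype κ] [Nonempty κ]

lemma maxBlock_subset (W : Finset V) : maxBlock φ ρ W ⊆ W := (isMaxDiscrepancy_max φ ρ W).1

lemma le_maxDiscrepancy_of_sameColor_blocks (hsum : ∑ i, ρ i = 1) (U : Finset V)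
    {I : Finset ℕ} {c : κ} {δ : ℝ}
    (hcol : ∀ l ∈ I, maxColor φ ρ (peel (maxBlock φ ρ) U l) = c)
    (hδ : ∀ l ∈ I, δ ≤ discrepancy φ ρ c (maxBlock φ ρ (peel (maxBlock φ ρ) U l))) :
    #I * (#I - 1) * δ ≤ 2 * (#I + Fintype.card κ - 1) * maxDiscrepancy φ ρ U := by
  set B := fun l => maxBlock φ ρ (peel (maxBlock φ ρ) U l)
  have hdisj : (I : Set ℕ).PairwiseDisjoint B :=
    (pairwise_disjoint_peel (maxBlock_subset φ ρ) U).subset (Set.subset_univ _)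
  have hBU : ∀ l, B l ⊆ U := fun l =>
    (maxBlock_subset φ ρ _).trans (peel_antitone _ U (Nat.zero_le l))
  have hM := (isMaxDiscrepancy_max φ ρ U).2
  have hcross :
      ∀ a ∈ I, ∀ l ∈ I, a < l → crossDiscrepancy φ ρ c (B a) (B l) ≤ -δ := by
    intro a ha l hl hal
    have hmax := isMaxDiscrepancy_max φ ρ (peel (maxBlock φ ρ) U a)
    rw [hcol a ha] at hmax
    have hl' := subset_peel_sdiff_of_lt (maxBlock_subset φ ρ) U hal
    linarith [crossDiscrepancy_le_neg_of_isMaxDiscrepancy hmax (hl'.trans sdiff_subset)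
      (disjoint_sdiff.mono_right hl'), hδ l hl]
  have hupper := two_mul_discrepancy_biUnion_le I hdisj (fun a _ => hM c _ (hBU a)) hcross
  have hlower := sub_card_mul_le_discrepancy c hsum
    (S := I.biUnion B) fun i => hM i _ (biUnion_subset.2 fun l _ => hBU l)
  rw [maxDiscrepancy]
  linarith

lemma card_maxBlock_lt {k : ℕ} (hno : ∀ j S, k ≤ #S → ¬IsDense φ ρ j S) (W : Finset V) :
    #(maxBlock φ ρ W) < k :=
  not_le.1 fun h => hno _ _ h (isDense_of_isMaxDiscrepancy (isMaxDiscrepancy_max φ ρ W))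

theorem two_pow_le_maxDiscrepancy (hρ : ∀ i, 0 < ρ i) (hsum : ∑ i, ρ i = 1) {k : ℕ}
    (hk : 2 ≤ k) (hno : ∀ j S, k ≤ #S → ¬IsDense φ ρ j S) (m : ℕ) {U : Finset V}
    (hU : (1 + m * (Fintype.card κ * (2 * Fintype.card κ + 4))) * k ≤ #U) :
    2 ^ m ≤ maxDiscrepancy φ ρ U := by
  induction m generalizing U with
  | zero =>
    have hkU : k ≤ #U := by simpa using hU
    obtain ⟨j, S, hSU, hS⟩ :=
      exists_one_le_discrepancy hρ hsum (hk.trans hkU) fun j => hno j U hkU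
    rw [pow_zero]
    exact hS.trans ((isMaxDiscrepancy_max φ ρ U).2 j S hSU)
  | succ m ih =>
    set q := Fintype.card κ with hq
    set B := fun l => peel (maxBlock φ ρ) U l
    have hlevel : ∀ l < q * (2 * q + 4), 2 ^ m ≤ maxDiscrepancy φ ρ (B l) := fun l hl => by
      have hpeel := card_le_card_peel_add (fun W => (card_maxBlock_lt φ ρ hno W).le) U l
      have := Nat.mul_le_mul_right k hl.le
      exact ih (by nlinarith)
    obtain ⟨c, -, hc⟩ := exists_le_card_fiber_of_mul_le_card_of_maps_to
      (s := range (q * (2 * q + 4))) (n := 2 * q + 4) (f := fun l => maxColor φ ρ (B l))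
      (fun _ _ => mem_univ _) univ_nonempty (by simp [q])
    obtain ⟨I, hI, hIcard⟩ := exists_subset_card_eq hc
    have hImem : ∀ l ∈ I, l < q * (2 * q + 4) ∧ maxColor φ ρ (B l) = c := fun l hl => by
      simpa using hI hl
    have hbound := le_maxDiscrepancy_of_sameColor_blocks φ ρ hsum U (δ := 2 ^ m)
      (fun l hl => (hImem l hl).2)
      fun l hl => (hImem l hl).2 ▸ hlevel l (hImem l hl).1
    rw [hIcard, ← hq] at hbound
    push_cast at hbound
    -- `t = 2q + 4` is chosen so that `t (t - 1) ≥ 4 (t + q - 1)`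
    have hδ : (0 : ℝ) < 2 ^ m := by positivity
    have hq0 : (0 : ℝ) ≤ q := q.cast_nonneg
    rw [pow_succ]
    by_contra! h
    nlinarith [mul_lt_mul_of_pos_left h (by positivity : (0 : ℝ) < 6 * q + 6),
      mul_nonneg (mul_nonneg hq0 hq0) hδ.le, mul_nonneg hq0 hδ.le]

end Greedy

theorem exists_isDense [Fintype V] [Fintype κ] (hρ : ∀ i, 0 < ρ i) (hsum : ∑ i, ρ i = 1)
    {k m : ℕ} (hk : 2 ≤ k) (hkm : k ^ 2 < 2 ^ m)
    (hV : (1 + m * (Fintype.card κ * (2 * Fintype.card κ + 4))) * k ≤ Fintype.card V) :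
    ∃ j S, k ≤ #S ∧ IsDense φ ρ j S := by
  have : Nonempty κ := by
    by_contra! h
    simp at hsum
  by_contra! hno
  have hkey := two_pow_le_maxDiscrepancy φ ρ hρ hsum hk hno m (U := univ) (by simpa using hV)
  have hcap := discrepancy_le_sq (φ := φ) (maxColor φ ρ univ) (hρ _).le (maxBlock φ ρ univ)
  have hsmall : (#(maxBlock φ ρ univ) : ℝ) ^ 2 < 2 ^ m := by
    exact_mod_cast (Nat.pow_lt_pow_left (card_maxBlock_lt φ ρ hno univ) two_ne_zero).trans hkm
  rw [maxDiscrepancy] at hkey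
  linarith

lemma one_add_log_mul_le (R : ℕ) {k : ℕ} (hk : 2 ≤ k) :
    1 + ((Nat.log 2 (k ^ 2) + 1 : ℕ) : ℝ) * R ≤ 6 * (R + 1) * Real.log k := by
  have hk' : (2 : ℝ) ≤ k := by exact_mod_cast hk
  have hlog2 : 1 / 2 < Real.log 2 := by linarith [Real.log_two_gt_d9]
  have hlogk : Real.log 2 ≤ Real.log k := Real.log_le_log two_pos hk'
  have hL : (Nat.log 2 (k ^ 2) : ℝ) * Real.log 2 ≤ 2 * Real.log k := by
    have hpow : ((2 ^ Nat.log 2 (k ^ 2) : ℕ) : ℝ) ≤ ((k ^ 2 : ℕ) : ℝ) := by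
      exact_mod_cast Nat.pow_log_le_self 2 (by positivity)
    push_cast at hpow
    have := Real.log_le_log (by positivity) hpow
    rwa [Real.log_pow, Real.log_pow] at this
  have hL0 : (0 : ℝ) ≤ Nat.log 2 (k ^ 2) := Nat.cast_nonneg _
  have hR : (0 : ℝ) ≤ R := R.cast_nonneg
  have hL4 : (Nat.log 2 (k ^ 2) : ℝ) ≤ 4 * Real.log k := by nlinarith
  push_cast
  nlinarith [mul_le_mul_of_nonneg_right hL4 hR]

end QuasiRamsey

theorem stmt10_general (q : ℕ) :
    ∃ C : ℝ, 0 < C ∧ ∀ k : ℕ, 2 ≤ k → ∀ n : ℕ, C * k * Real.log k ≤ n →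
      ∀ φ : Finset (Fin n) → Fin q,
      ∀ ρ : Fin q → ℝ, (∀ i, ρ i ∈ Set.Ioo (0 : ℝ) 1) → ∑ i, ρ i = 1 →
      ∃ j : Fin q, ∃ S : Finset (Fin n), k ≤ S.card ∧
        ∀ v ∈ S,
          ρ j * ((S.card : ℝ) - 1) ≤
            ((S.filter (fun u => u ≠ v ∧ φ {u, v} = j)).card : ℝ) := by
  refine ⟨6 * ((q * (2 * q + 4) : ℕ) + 1), by positivity, fun k hk n hn φ ρ hρ hsum => ?_⟩
  have hn' : (1 + (Nat.log 2 (k ^ 2) + 1) * (q * (2 * q + 4))) * k ≤ n := by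
    have := mul_le_mul_of_nonneg_right (QuasiRamsey.one_add_log_mul_le (q * (2 * q + 4)) hk) k.cast_nonneg
    have hreal : (((1 + (Nat.log 2 (k ^ 2) + 1) * (q * (2 * q + 4))) * k : ℕ) : ℝ) ≤ n := by
      push_cast at this hn ⊢
      linarith
    exact_mod_cast hreal
  exact QuasiRamsey.exists_isDense φ ρ (fun i => (hρ i).1) hsum hk
    (Nat.lt_pow_succ_log_self one_lt_two _) (by simpa using hn')

/-- **Quasi-Ramsey with ν = 0 and varying degree shares.**
For every `q ≥ 2` there is `C > 0` such that for every `k ≥ 2`, every `n ≥ C·k·ln k`, every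
`q`-colouring `φ` of the edges of the complete graph on `[n]`, and every tuple
`(ρ 1, …, ρ q) ∈ (0,1)^q` with `∑ ρ i = 1`, there are a colour `j` and a set `S` of size
`ℓ ≥ k` such that the graph induced by `S` in colour `j` has minimum degree at least
`ρ j · (ℓ−1)`. -/
theorem stmt10 (q : ℕ) (hq : 2 ≤ q) :
    ∃ C : ℝ, 0 < C ∧ ∀ k : ℕ, 2 ≤ k → ∀ n : ℕ, C * k * Real.log k ≤ n →
      ∀ φ : Finset (Fin n) → Fin q,
      ∀ ρ : Fin q → ℝ, (∀ i, ρ i ∈ Set.Ioo (0 : ℝ) 1) → ∑ i, ρ i = 1 →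
      ∃ j : Fin q, ∃ S : Finset (Fin n), k ≤ S.card ∧
        ∀ v ∈ S,
          ρ j * ((S.card : ℝ) - 1) ≤
            ((S.filter (fun u => u ≠ v ∧ φ {u, v} = j)).card : ℝ) :=
  stmt10_general q
end

section
/- Let r ≥ 2 be an integer and let ε > 0. There exists a constant c = c(ε, r) > 0 such that for every ρ ∈ [0, 1−ε] and every r-uniform hypergraph H on N vertices with at least (ρ+ε)·C(N, r) hyperedges, there is a subset T of the vertices with |T| ≥ c·N such that every vertex of the induced subhypergraph H[T] has degree at least (ρ + ε/2)·C(|T|−1, r−1), where C(a,b) denotes the binomial coefficient. -/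

private lemma descFac_ineq (r : ℕ) : ∀ t N : ℕ, t ≤ N →
    t.descFactorial r * N ^ r ≤ N.descFactorial r * t ^ r := by
  induction r with
  | zero => simp
  | succ r ih =>
    intro t N h
    rw [Nat.descFactorial_succ, Nat.descFactorial_succ, pow_succ, pow_succ]
    have h1 : (t - r) * N ≤ (N - r) * t := by
      rw [Nat.sub_mul, Nat.sub_mul, mul_comm N t]
      exact Nat.sub_le_sub_left (Nat.mul_le_mul_left r h) _
    calc (t - r) * t.descFactorial r * (N ^ r * N)
        = ((t - r) * N) * (t.descFactorial r * N ^ r) := by ring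
      _ ≤ ((N - r) * t) * (N.descFactorial r * t ^ r) := Nat.mul_le_mul h1 (ih t N h)
      _ = (N - r) * N.descFactorial r * (t ^ r * t) := by ring

private lemma choose_ineq (r t N : ℕ) (h : t ≤ N) :
    t.choose r * N ^ r ≤ N.choose r * t ^ r := by
  have := descFac_ineq r t N h
  rw [Nat.descFactorial_eq_factorial_mul_choose, Nat.descFactorial_eq_factorial_mul_choose] at this
  have hf : 0 < r.factorial := Nat.factorial_pos r
  refine Nat.le_of_mul_le_mul_left ?_ hf
  calc r.factorial * (t.choose r * N ^ r) = r.factorial * t.choose r * N ^ r := by ring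
    _ ≤ r.factorial * N.choose r * t ^ r := this
    _ = r.factorial * (N.choose r * t ^ r) := by ring

private lemma greedy (r N : ℕ) (hr : 1 ≤ r) (ρ ε : ℝ) (hρε : 0 ≤ ρ + ε / 2)
    (E : Finset (Finset (Fin N))) :
    ∀ n : ℕ, ∀ T : Finset (Fin N), T.card = n →
      ∃ T' : Finset (Fin N), T' ⊆ T ∧
        (∀ v ∈ T', (ρ + ε / 2) * (((T'.card - 1).choose (r - 1) : ℕ) : ℝ) ≤
            ((E.filter (fun e => e ⊆ T' ∧ v ∈ e)).card : ℝ)) ∧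
        ((E.filter (fun e => e ⊆ T)).card : ℝ) ≤
          (ρ + ε / 2) * ((T.card.choose r : ℝ) - (T'.card.choose r : ℝ)) +
            ((E.filter (fun e => e ⊆ T')).card : ℝ) := by
  intro n
  induction n using Nat.strong_induction_on with
  | _ n ih =>
    intro T hT
    by_cases hgood : ∀ v ∈ T, (ρ + ε / 2) * (((T.card - 1).choose (r - 1) : ℕ) : ℝ) ≤
        ((E.filter (fun e => e ⊆ T ∧ v ∈ e)).card : ℝ)
    · exact ⟨T, subset_rfl, hgood, by simp⟩
    · push_neg at hgood
      obtain ⟨v, hv, hdeg⟩ := hgood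
      have hn : 1 ≤ n := by
        rw [← hT]; exact Finset.card_pos.mpr ⟨v, hv⟩
      have hcard : (T.erase v).card = n - 1 := by
        rw [Finset.card_erase_of_mem hv, hT]
      obtain ⟨T', hsub, hgood', hineq⟩ := ih (n - 1) (by omega) (T.erase v) hcard
      refine ⟨T', hsub.trans (Finset.erase_subset v T), hgood', ?_⟩
      -- split the edge count of T
      have hsplit : (E.filter (fun e => e ⊆ T)).card =
          (E.filter (fun e => e ⊆ T ∧ v ∈ e)).card +
          (E.filter (fun e => e ⊆ T.erase v)).card := by
        have h2 : E.filter (fun e => e ⊆ T ∧ ¬ v ∈ e) = E.filter (fun e => e ⊆ T.erase v) := by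
          apply Finset.filter_congr
          intro e _
          simp [Finset.subset_erase]
        have := Finset.card_filter_add_card_filter_not
          (s := E.filter (fun e => e ⊆ T)) (p := fun e => v ∈ e)
        rw [Finset.filter_filter, Finset.filter_filter] at this
        rw [← this, h2]
      have hid : (T.card.choose r : ℝ) =
          (((T.card - 1).choose (r - 1) : ℕ) : ℝ) + (((T.card - 1).choose r : ℕ) : ℝ) := by
        have h3 : T.card.choose r = (T.card - 1).choose (r - 1) + (T.card - 1).choose r := by
          obtain ⟨m, hm⟩ : ∃ m, T.card = m + 1 := ⟨n - 1, by omega⟩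
          obtain ⟨s, hs⟩ : ∃ s, r = s + 1 := ⟨r - 1, by omega⟩
          simp [hm, hs, Nat.choose_succ_succ]
        exact_mod_cast congrArg (Nat.cast : ℕ → ℝ) h3
      have hTe : (T.erase v).card = T.card - 1 := Finset.card_erase_of_mem hv
      rw [hTe] at hineq
      have hs2 : ((E.filter (fun e => e ⊆ T)).card : ℝ) =
          ((E.filter (fun e => e ⊆ T ∧ v ∈ e)).card : ℝ) +
          ((E.filter (fun e => e ⊆ T.erase v)).card : ℝ) := by exact_mod_cast hsplit
      rw [hid]
      linarith [hdeg.le, hineq, hs2]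

/-- **Greedy deletion yields a dense induced subhypergraph.**
Let `r ≥ 2` and `ε > 0`. There is `c = c(ε,r) > 0` such that for every `ρ ∈ [0, 1−ε]` and
every `r`-uniform hypergraph `H` on `N` vertices with at least `(ρ+ε)·C(N,r)` hyperedges,
there is a vertex subset `T` with `|T| ≥ c·N` such that every vertex of `H[T]` has degree at
least `(ρ + ε/2)·C(|T|−1, r−1)`. -/
theorem stmt13 (r : ℕ) (hr : 2 ≤ r) (ε : ℝ) (hε : 0 < ε) :
    ∃ c : ℝ, 0 < c ∧ ∀ ρ : ℝ, ρ ∈ Set.Icc (0 : ℝ) (1 - ε) →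
      ∀ N : ℕ, ∀ E : Finset (Finset (Fin N)), (∀ e ∈ E, e.card = r) →
      (ρ + ε) * (N.choose r : ℝ) ≤ (E.card : ℝ) →
      ∃ T : Finset (Fin N), c * N ≤ (T.card : ℝ) ∧
        ∀ v ∈ T,
          (ρ + ε / 2) * ((T.card - 1).choose (r - 1) : ℝ) ≤
            ((E.filter (fun e => e ⊆ T ∧ v ∈ e)).card : ℝ) := by
  refine ⟨min 1 (ε / 2), lt_min one_pos (by linarith), ?_⟩
  intro ρ hρ N E hE hcount
  obtain ⟨hρ0, hρ1⟩ := hρ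
  have hρε : 0 ≤ ρ + ε / 2 := by linarith
  have hc1 : min 1 (ε / 2) ≤ 1 := min_le_left _ _
  have hc2 : min 1 (ε / 2) ≤ ε / 2 := min_le_right _ _
  have hc0 : 0 < min 1 (ε / 2) := lt_min one_pos (by linarith)
  by_cases hNr : N < r
  · refine ⟨Finset.univ, ?_, ?_⟩
    · rw [Finset.card_univ, Fintype.card_fin]
      exact mul_le_of_le_one_left (Nat.cast_nonneg N) hc1
    · intro v hv
      have hN : 0 < N := v.pos
      have : (Finset.univ (α := Fin N)).card - 1 < r - 1 := by
        rw [Finset.card_univ, Fintype.card_fin]; omega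
      rw [Nat.choose_eq_zero_of_lt this]
      simp
  · push_neg at hNr
    have hNpos : 0 < N := by omega
    obtain ⟨T', hsub, hgood, hineq⟩ := greedy r N (by omega) ρ ε hρε E N Finset.univ
      (by rw [Finset.card_univ, Fintype.card_fin])
    have huniv : E.filter (fun e => e ⊆ Finset.univ) = E := by
      apply Finset.filter_true_of_mem; intro e _; exact Finset.subset_univ e
    rw [huniv, Finset.card_univ, Fintype.card_fin] at hineq
    -- edges in T' are at most C(|T'|, r)
    have hupper : ((E.filter (fun e => e ⊆ T')).card : ℝ) ≤ (T'.card.choose r : ℝ) := by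
      have hss : E.filter (fun e => e ⊆ T') ⊆ T'.powersetCard r := by
        intro e he
        rw [Finset.mem_filter] at he
        rw [Finset.mem_powersetCard]
        exact ⟨he.2, hE e he.1⟩
      have := Finset.card_le_card hss
      rw [Finset.card_powersetCard] at this
      exact_mod_cast this
    have hCt0 : (0:ℝ) ≤ (T'.card.choose r : ℝ) := Nat.cast_nonneg _
    -- (ε/2) C(N,r) ≤ C(|T'|, r)
    have hkey : (ε / 2) * (N.choose r : ℝ) ≤ (T'.card.choose r : ℝ) := by
      nlinarith [mul_nonneg hρε hCt0]
    -- conclude |T'| ≥ c N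
    have hT'N : T'.card ≤ N := by
      have := Finset.card_le_card (Finset.subset_univ T')
      rwa [Finset.card_univ, Fintype.card_fin] at this
    refine ⟨T', ?_, hgood⟩
    by_contra hcon
    push_neg at hcon
    have hch : ((T'.card.choose r : ℕ) : ℝ) * (N:ℝ) ^ r ≤ ((N.choose r : ℕ):ℝ) * (T'.card:ℝ) ^ r := by
      exact_mod_cast choose_ineq r T'.card N hT'N
    have hCN : (0:ℝ) < (N.choose r : ℝ) := by
      exact_mod_cast Nat.choose_pos hNr
    have hNr0 : (0:ℝ) < (N:ℝ) ^ r := by positivity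
    have h1 : (ε / 2) * (N:ℝ) ^ r ≤ (T'.card : ℝ) ^ r := by
      have h2 : (ε / 2) * (N.choose r : ℝ) * (N:ℝ) ^ r ≤ (N.choose r : ℝ) * (T'.card:ℝ) ^ r :=
        le_trans (mul_le_mul_of_nonneg_right hkey hNr0.le) hch
      nlinarith
    have h3 : (T'.card : ℝ) ^ r < (min 1 (ε/2) * N) ^ r :=
      pow_lt_pow_left₀ hcon (Nat.cast_nonneg _) (by omega)
    have h4 : (min 1 (ε/2) * (N:ℝ)) ^ r ≤ (ε / 2) * (N:ℝ) ^ r := by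
      rw [mul_pow]
      have h5 : min 1 (ε/2) ^ r ≤ min 1 (ε/2) :=
        pow_le_of_le_one hc0.le hc1 (by omega)
      nlinarith
    linarith
end

section
/- Let r ≥ 2 be an integer and let H = (V, E) be an r-uniform hypergraph with N vertices and exactly p·C(N, r) hyperedges, where p = |E|/C(N,r) is its edge density. Let n ≤ N and let S ⊆ V be a uniformly random subset of n distinct vertices. Then for every ε with 0 < ε < p, the probability that e(H[S]) ≤ (p − ε)·C(n, r) is strictly less than exp(−2ε²(n − 2(r−1))/r²). -/
/-!
Vertex exposure. Reveal the vertices of the random `n`-set one at a time; when `T` has been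
revealed, the conditional expectation of `e(H[S])` is its average over the `n`-sets containing
`T`, and the next vertex is uniform on `Tᶜ`. Swapping one vertex of `S` for another changes
`e(H[S])` by at most `C(n-1, r-1) = (r/n)·C(n, r)`, so the averages after revealing `T ∪ {a}`
and `T ∪ {b}` differ by at most that much (compare along the swap of `a` and `b`). Hoeffding's
lemma then bounds the moment generating function at each of the `n` steps, and the Chernoff
bound with the optimal parameter gives `exp(-2ε²n/r²)`, which is smaller than the claimed bound.
If `n < r` the claimed bound exceeds `1`.
-/

open Real Finset MeasureTheory ProbabilityTheory

theorem sum_exp_div_card_le_of_mem_Icc {ι : Type*} {s : Finset ι} (hs : s.Nonempty)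
    {y : ι → ℝ} {a b : ℝ} (hy : ∀ i ∈ s, y i ∈ Set.Icc a b) :
    (∑ i ∈ s, exp (y i)) / #s ≤ exp ((∑ i ∈ s, y i) / #s + (b - a) ^ 2 / 8) := by
  let _ : MeasurableSpace s := ⊤
  have : Nonempty s := hs.to_subtype
  set μ := (PMF.uniformOfFintype s).toMeasure
  have integral_eq (g : ι → ℝ) : ∫ i, g i ∂μ = (∑ i ∈ s, g i) / #s := by
    rw [PMF.integral_eq_sum, ← Finset.sum_coe_sort s, Finset.sum_div]
    simp [PMF.uniformOfFintype_apply, div_eq_inv_mul]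
  have hoeffding := (hasSubgaussianMGF_of_mem_Icc (μ := μ) (X := fun i : s => y i)
    (measurable_of_countable _).aemeasurable (ae_of_all _ fun i => hy i i.2)).mgf_le 1
  simp only [mgf, one_mul, integral_eq, exp_sub, integral_div] at hoeffding
  rw [integral_eq (fun i => exp (y i)), div_le_iff₀ (exp_pos _), ← exp_add] at hoeffding
  refine hoeffding.trans_eq (congrArg exp ?_)
  rw [NNReal.coe_pow, NNReal.coe_div, coe_nnnorm, Real.norm_eq_abs, NNReal.coe_ofNat, div_pow,
    sq_abs]
  ring

theorem Finset.erase_subset_map_swap {α : Type*} [DecidableEq α] {a b : α} {S : Finset α}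
    (ha : a ∈ S) :
    S.erase a ⊆ S.map (Equiv.swap a b).toEmbedding := by
  intro v hv
  obtain ⟨hva, hvS⟩ := mem_erase.1 hv
  rw [mem_map_equiv, Equiv.symm_swap]
  by_cases hvb : v = b
  · rwa [hvb, Equiv.swap_apply_right]
  · rwa [Equiv.swap_apply_of_ne_of_ne hva hvb]

theorem card_edges_le_of_erase_subset {α : Type*} [DecidableEq α] {E : Finset (Finset α)}
    {r : ℕ} (hE : ∀ e ∈ E, #e = r) {S S' : Finset α} {a : α}
    (ha : a ∈ S) (hS : S.erase a ⊆ S') :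
    #{e ∈ E | e ⊆ S} ≤ #{e ∈ E | e ⊆ S'} + (#S - 1).choose (r - 1) := by
  rw [← card_filter_add_card_filter_not (p := fun e => a ∈ e), add_comm]
  gcongr
  · intro e he
    simp only [mem_filter] at he ⊢
    exact ⟨he.1.1, fun v hv => hS (mem_erase.2 ⟨fun h => he.2 (h ▸ hv), he.1.2 hv⟩)⟩
  · rw [← card_erase_of_mem ha, ← card_powersetCard]
    refine card_le_card_of_injOn (·.erase a) (fun e he => ?_)
      ((erase_injOn' a).mono fun e he => (mem_filter.1 he).2)
    obtain ⟨⟨heE, heS⟩, hae⟩ := by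
      simpa only [coe_filter, Set.mem_ofPred_eq, mem_filter] using he
    rw [mem_coe, mem_powersetCard, card_erase_of_mem hae, hE e heE]
    exact ⟨erase_subset_erase a heS, rfl⟩

namespace RandomSubset

variable {V : Type*} [Fintype V] [DecidableEq V] {n : ℕ} {T : Finset V}

def extensions (n : ℕ) (T : Finset V) : Finset (Finset V) :=
  {S ∈ powersetCard n univ | T ⊆ S}

@[simp]
theorem mem_extensions {S : Finset V} : S ∈ extensions n T ↔ #S = n ∧ T ⊆ S := by
  simp [extensions]

theorem mem_extensions_insert {a : V} {S : Finset V} :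
    S ∈ extensions n (insert a T) ↔ #S = n ∧ a ∈ S ∧ T ⊆ S := by
  rw [mem_extensions, insert_subset_iff]

theorem extensions_empty : extensions n (∅ : Finset V) = powersetCard n univ := by
  ext S; simp

theorem extensions_of_card_eq (hT : #T = n) : extensions n T = {T} := by
  ext S
  simp only [mem_extensions, mem_singleton]
  constructor
  · exact fun ⟨hS, hTS⟩ => (eq_of_subset_of_card_le hTS (hS.trans hT.symm).le).symm
  · rintro rfl
    exact ⟨hT, subset_rfl⟩

theorem card_extensions (hT : #T ≤ n) :
    #(extensions n T) = (Fintype.card V - #T).choose (n - #T) := by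
  rw [← card_compl, ← card_powersetCard]
  refine card_nbij' (· \ T) (· ∪ T) (fun S hS => ?_) (fun U hU => ?_)
    (fun S hS => sdiff_union_of_subset (mem_extensions.1 hS).2)
    (fun U hU => union_sdiff_cancel_right (disjoint_of_subset_left
      (mem_powersetCard.1 hU).1 disjoint_compl_left))
  · obtain ⟨hS, hTS⟩ := mem_extensions.1 hS
    rw [mem_coe, mem_powersetCard]
    exact ⟨fun v hv => mem_compl.2 (mem_sdiff.1 hv).2, by rw [card_sdiff_of_subset hTS, hS]⟩
  · obtain ⟨hUT, hU⟩ := mem_powersetCard.1 hU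
    rw [mem_coe, mem_extensions,
      card_union_of_disjoint (disjoint_of_subset_left hUT disjoint_compl_left), hU]
    exact ⟨by omega, subset_union_right⟩

theorem card_extensions_pos (hT : #T ≤ n) (hn : n ≤ Fintype.card V) :
    0 < #(extensions n T) := by
  rw [card_extensions hT]
  exact Nat.choose_pos (by omega)

theorem sum_sum_extensions_insert {M : Type*} [AddCommMonoid M] (f : Finset V → M) :
    ∑ v ∈ Tᶜ, ∑ S ∈ extensions n (insert v T), f S
      = (n - #T) • ∑ S ∈ extensions n T, f S := by
  rw [sum_comm' (t' := extensions n T) (s' := (· \ T)), smul_sum]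
  · refine sum_congr rfl fun S hS => ?_
    obtain ⟨hS, hTS⟩ := mem_extensions.1 hS
    rw [sum_const, card_sdiff_of_subset hTS, hS]
  · intro v S
    simp only [mem_compl, mem_extensions, insert_subset_iff, mem_sdiff]
    tauto

noncomputable def condAvg (n : ℕ) (f : Finset V → ℝ) (T : Finset V) : ℝ :=
  (∑ S ∈ extensions n T, f S) / #(extensions n T)

theorem condAvg_of_card_eq (f : Finset V → ℝ) (hT : #T = n) : condAvg n f T = f T := by
  simp [condAvg, extensions_of_card_eq hT]

theorem condAvg_eq_sum_condAvg_insert_div (hT : #T < n) (hn : n ≤ Fintype.card V)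
    (f : Finset V → ℝ) :
    condAvg n f T = (∑ v ∈ Tᶜ, condAvg n f (insert v T)) / #Tᶜ := by
  set m := (Fintype.card V - (#T + 1)).choose (n - (#T + 1))
  have hcard : ∀ v ∈ Tᶜ, #(extensions n (insert v T)) = m := fun v hv => by
    rw [card_extensions (by rw [card_insert_of_notMem (mem_compl.1 hv)]; omega),
      card_insert_of_notMem (mem_compl.1 hv)]
  have hm : (0 : ℝ) < m := by exact_mod_cast Nat.choose_pos (by omega)
  have hext : (0 : ℝ) < #(extensions n T) := by exact_mod_cast card_extensions_pos hT.le hn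
  have hTc : (0 : ℝ) < #Tᶜ := by
    rw [card_compl]
    exact_mod_cast Nat.sub_pos_of_lt (hT.trans_le hn)
  have hpairs : (#Tᶜ * m : ℝ) = (n - #T : ℕ) * #(extensions n T) := by
    have hcount := sum_sum_extensions_insert (n := n) (T := T) (fun _ => 1)
    simp only [sum_const, smul_eq_mul, mul_one] at hcount
    rw [sum_congr rfl hcard, sum_const, smul_eq_mul] at hcount
    exact_mod_cast hcount
  have hsum : ∑ v ∈ Tᶜ, condAvg n f (insert v T)
      = (n - #T : ℕ) * (∑ S ∈ extensions n T, f S) / m := by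
    rw [sum_congr rfl fun v hv => by rw [condAvg, hcard v hv], ← sum_div,
      sum_sum_extensions_insert, nsmul_eq_mul]
  rw [hsum, condAvg]
  field_simp
  linear_combination (∑ S ∈ extensions n T, f S) * hpairs

theorem map_swap_mem_extensions {a b : V} (ha : a ∉ T) (hb : b ∉ T) {S : Finset V}
    (hS : S ∈ extensions n (insert a T)) :
    S.map (Equiv.swap a b).toEmbedding ∈ extensions n (insert b T) := by
  obtain ⟨hS, haS, hTS⟩ := mem_extensions_insert.1 hS
  refine mem_extensions.2 ⟨by rw [card_map, hS], insert_subset_iff.2 ⟨?_, fun v hv => ?_⟩⟩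
  · rwa [mem_map_equiv, Equiv.symm_swap, Equiv.swap_apply_right]
  · rw [mem_map_equiv, Equiv.symm_swap, Equiv.swap_apply_of_ne_of_ne (ne_of_mem_of_not_mem hv ha)
      (ne_of_mem_of_not_mem hv hb)]
    exact hTS hv

def BoundedDifferences (n : ℕ) (c : ℝ) (f : Finset V → ℝ) : Prop :=
  ∀ S S' : Finset V, #S = n → #S' = n → ∀ a ∈ S, S.erase a ⊆ S' → f S ≤ f S' + c

variable {f : Finset V → ℝ} {c : ℝ}

theorem condAvg_insert_le_add (hf : BoundedDifferences n c f) (hT : #T < n)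
    (hn : n ≤ Fintype.card V) {a b : V} (ha : a ∉ T) (hb : b ∉ T) :
    condAvg n f (insert a T) ≤ condAvg n f (insert b T) + c := by
  set σ := (Equiv.swap a b).finsetCongr
  have hσσ : ∀ S, σ (σ S) = S := fun S => by ext; simp [σ, mem_map_equiv]
  have hσ : ∀ S, S ∈ extensions n (insert a T) ↔ σ S ∈ extensions n (insert b T) := by
    refine fun S => ⟨map_swap_mem_extensions ha hb, fun h => ?_⟩
    have := map_swap_mem_extensions hb ha h
    rwa [Equiv.swap_comm b a, ← Equiv.finsetCongr_apply, hσσ] at this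
  have hsum := sum_equiv σ hσ (fun S _ => rfl) (f := f ∘ σ) (g := f)
  have hcard := card_equiv σ hσ
  have hpos : (0 : ℝ) < #(extensions n (insert a T)) := by
    exact_mod_cast card_extensions_pos (by rw [card_insert_of_notMem ha]; omega) hn
  have hle : ∑ S ∈ extensions n (insert a T), f S
      ≤ ∑ S ∈ extensions n (insert a T), (f (σ S) + c) := by
    refine sum_le_sum fun S hS => ?_
    obtain ⟨hS, haS, -⟩ := mem_extensions_insert.1 hS
    exact hf S (σ S) hS (by simp [σ, hS]) a haS (erase_subset_map_swap haS)
  rw [sum_add_distrib, sum_const, nsmul_eq_mul] at hle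
  rw [condAvg, condAvg, ← hcard, ← hsum, div_add' _ _ _ hpos.ne',
    div_le_div_iff_of_pos_right hpos]
  simpa [mul_comm] using hle

theorem condAvg_exp_le_of_insert (hf : BoundedDifferences n c f) (hT : #T < n)
    (hn : n ≤ Fintype.card V) {t K : ℝ} (ht : 0 ≤ t)
    (h : ∀ v ∉ T, condAvg n (fun S => exp (-t * f S)) (insert v T)
      ≤ exp (-t * condAvg n f (insert v T) + K)) :
    condAvg n (fun S => exp (-t * f S)) T ≤ exp (-t * condAvg n f T + K + (t * c) ^ 2 / 8) := by
  have hne : Tᶜ.Nonempty := by rw [← card_pos, card_compl]; omega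
  obtain ⟨v₀, hv₀, hmin⟩ := Tᶜ.exists_min_image (fun v => condAvg n f (insert v T)) hne
  set m := condAvg n f (insert v₀ T)
  have hy : ∀ v ∈ Tᶜ, -t * condAvg n f (insert v T) ∈ Set.Icc (-t * (m + c)) (-t * m) := by
    intro v hv
    have h1 := hmin v hv
    have h2 := condAvg_insert_le_add hf hT hn (mem_compl.1 hv) (mem_compl.1 hv₀)
    constructor <;> nlinarith
  rw [condAvg_eq_sum_condAvg_insert_div hT hn, condAvg_eq_sum_condAvg_insert_div hT hn f]
  calc (∑ v ∈ Tᶜ, condAvg n (fun S => exp (-t * f S)) (insert v T)) / #Tᶜ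
      ≤ (∑ v ∈ Tᶜ, exp (-t * condAvg n f (insert v T) + K)) / #Tᶜ := by
        gcongr with v hv
        exact h v (mem_compl.1 hv)
    _ = exp K * ((∑ v ∈ Tᶜ, exp (-t * condAvg n f (insert v T))) / #Tᶜ) := by
        simp_rw [exp_add, ← sum_mul]
        ring
    _ ≤ exp K * exp ((∑ v ∈ Tᶜ, -t * condAvg n f (insert v T)) / #Tᶜ
          + (-t * m - -t * (m + c)) ^ 2 / 8) := by
        gcongr
        exact sum_exp_div_card_le_of_mem_Icc hne hy
    _ = exp (-t * ((∑ v ∈ Tᶜ, condAvg n f (insert v T)) / #Tᶜ) + K + (t * c) ^ 2 / 8) := by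
        rw [← exp_add, ← mul_sum]
        ring_nf

theorem condAvg_exp_le (hf : BoundedDifferences n c f) (hn : n ≤ Fintype.card V) {t : ℝ}
    (ht : 0 ≤ t) (k : ℕ) (T : Finset V) (hT : #T + k = n) :
    condAvg n (fun S => exp (-t * f S)) T ≤ exp (-t * condAvg n f T + k * ((t * c) ^ 2 / 8)) := by
  induction k generalizing T with
  | zero => simp [condAvg_of_card_eq _ hT]
  | succ k ih =>
    refine (condAvg_exp_le_of_insert hf (by omega) hn ht fun v hv => ih _ ?_).trans_eq ?_
    · rw [card_insert_of_notMem hv]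
      omega
    · push_cast
      ring_nf

theorem card_filter_le_condAvg_sub_div_le (hf : BoundedDifferences n c f)
    (hn : n ≤ Fintype.card V) {δ : ℝ} (hδ : 0 ≤ δ) :
    (#{S ∈ powersetCard n univ | f S ≤ condAvg n f ∅ - δ} : ℝ) / (Fintype.card V).choose n
      ≤ exp (-2 * δ ^ 2 / (n * c ^ 2)) := by
  set μ := condAvg n f ∅
  -- the Chernoff parameter minimising `-t δ + n (t c)² / 8`
  set t := 4 * δ / (n * c ^ 2)
  have ht : 0 ≤ t := by positivity
  have hext : #(extensions n (∅ : Finset V)) = (Fintype.card V).choose n := by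
    rw [extensions_empty, card_powersetCard, card_univ]
  have hpos : (0 : ℝ) < (Fintype.card V).choose n := by exact_mod_cast Nat.choose_pos hn
  have hmarkov : (#{S ∈ powersetCard n univ | f S ≤ μ - δ} : ℝ) * exp (-t * (μ - δ))
      ≤ (Fintype.card V).choose n * condAvg n (fun S => exp (-t * f S)) ∅ := by
    rw [condAvg, ← hext, mul_div_cancel₀ _ (hext ▸ hpos.ne'), extensions_empty,
      ← nsmul_eq_mul]
    refine (card_nsmul_le_sum _ _ _ fun S hS => ?_).trans
      (sum_le_sum_of_subset_of_nonneg (filter_subset _ _) fun _ _ _ => (exp_pos _).le)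
    exact exp_le_exp.2 (mul_le_mul_of_nonpos_left (mem_filter.1 hS).2 (by linarith))
  have hexp : -t * δ + n * ((t * c) ^ 2 / 8) = -2 * δ ^ 2 / (n * c ^ 2) := by
    rcases eq_or_ne ((n : ℝ) * c ^ 2) 0 with h | h
    · simp [t, h]
    · simp only [t]
      field_simp
      ring
  rw [div_le_iff₀ hpos]
  refine le_of_mul_le_mul_right (hmarkov.trans ?_) (exp_pos (-t * (μ - δ)))
  calc (Fintype.card V).choose n * condAvg n (fun S => exp (-t * f S)) ∅
      ≤ (Fintype.card V).choose n * exp (-t * μ + n * ((t * c) ^ 2 / 8)) := by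
        gcongr
        simpa using condAvg_exp_le hf hn ht n ∅ (by simp)
    _ = exp (-2 * δ ^ 2 / (n * c ^ 2)) * (Fintype.card V).choose n * exp (-t * (μ - δ)) := by
        rw [← hexp, mul_right_comm, ← exp_add, mul_comm]
        ring_nf

section Hypergraph

variable {E : Finset (Finset V)} {r : ℕ}

theorem condAvg_card_edges (hE : ∀ e ∈ E, #e = r) (hrn : r ≤ n) (hn : n ≤ Fintype.card V) :
    condAvg n (fun S => (#{e ∈ E | e ⊆ S} : ℝ)) ∅
      = #E * n.choose r / (Fintype.card V).choose r := by
  have hsum : ∑ S ∈ extensions n ∅, #{e ∈ E | e ⊆ S}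
      = #E * (Fintype.card V - r).choose (n - r) := by
    simp_rw [card_filter]
    rw [sum_comm, extensions_empty, ← smul_eq_mul, ← sum_const]
    refine sum_congr rfl fun e he => ?_
    rw [← card_filter, ← hE e he]
    exact card_extensions ((hE e he).trans_le hrn)
  have hchoose := congrArg (Nat.cast : ℕ → ℝ) (Nat.choose_mul (n := Fintype.card V) hrn)
  have hext : #(extensions n (∅ : Finset V)) = (Fintype.card V).choose n := by
    rw [extensions_empty, card_powersetCard, card_univ]
  push_cast at hchoose
  have hNn : ((Fintype.card V).choose n : ℝ) ≠ 0 := by exact_mod_cast (Nat.choose_pos hn).ne'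
  have hNr : ((Fintype.card V).choose r : ℝ) ≠ 0 := by
    exact_mod_cast (Nat.choose_pos (hrn.trans hn)).ne'
  rw [condAvg, ← Nat.cast_sum, hsum, hext, div_eq_div_iff hNn hNr]
  push_cast
  linear_combination (#E : ℝ) * hchoose.symm

theorem card_filter_card_edges_le_div_le (hE : ∀ e ∈ E, #e = r) (hr : 1 ≤ r) (hrn : r ≤ n)
    (hn : n ≤ Fintype.card V) {ε : ℝ} (hε : 0 ≤ ε) :
    (#{S ∈ powersetCard n univ |
        (#{e ∈ E | e ⊆ S} : ℝ) ≤ (#E / (Fintype.card V).choose r - ε) * n.choose r} : ℝ)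
        / (Fintype.card V).choose n
      ≤ exp (-2 * ε ^ 2 * n / r ^ 2) := by
  have hf : BoundedDifferences n ((n - 1).choose (r - 1)) (fun S => (#{e ∈ E | e ⊆ S} : ℝ)) :=
    fun S S' hS _ a ha hSS' => by
      dsimp only
      exact_mod_cast hS ▸ card_edges_le_of_erase_subset hE ha hSS'
  have htail := card_filter_le_condAvg_sub_div_le hf hn (δ := ε * n.choose r) (by positivity)
  rw [condAvg_card_edges hE hrn hn] at htail
  have hchoose : (n : ℝ) * (n - 1).choose (r - 1) = r * n.choose r := by
    obtain ⟨m, rfl⟩ : ∃ m, n = m + 1 := ⟨n - 1, by omega⟩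
    obtain ⟨s, rfl⟩ : ∃ s, r = s + 1 := ⟨r - 1, by omega⟩
    exact_mod_cast (Nat.add_one_mul_choose_eq m s).trans (mul_comm _ _)
  have hthreshold : (#E / (Fintype.card V).choose r - ε) * n.choose r
      = #E * n.choose r / (Fintype.card V).choose r - ε * n.choose r := by ring
  have hn0 : (n : ℝ) ≠ 0 := by exact_mod_cast (by omega : n ≠ 0)
  have hc0 : ((n - 1).choose (r - 1) : ℝ) ≠ 0 := by
    exact_mod_cast (Nat.choose_pos (by omega)).ne'
  rw [hthreshold]
  refine htail.trans_eq (congrArg exp ?_)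
  rw [div_eq_div_iff (by positivity) (by positivity)]
  linear_combination 2 * ε ^ 2 * (n * (n - 1).choose (r - 1) + r * n.choose r) * hchoose

end Hypergraph

end RandomSubset

theorem stmt14_general (r : ℕ) (hr : 2 ≤ r) (V : Type) [Fintype V] [DecidableEq V]
    (E : Finset (Finset V)) (hE : ∀ e ∈ E, e.card = r)
    (N : ℕ) (hN : Fintype.card V = N)
    (p : ℝ) (hp : p = (E.card : ℝ) / (N.choose r : ℝ))
    (n : ℕ) (hn : n ≤ N) (ε : ℝ) (hε : 0 < ε) :
    (Nat.card {S : Finset V // S.card = n ∧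
        ((E.filter (· ⊆ S)).card : ℝ) ≤ (p - ε) * (n.choose r : ℝ)} : ℝ) /
        (N.choose n : ℝ) <
      Real.exp (-2 * ε ^ 2 * ((n : ℝ) - 2 * ((r : ℝ) - 1)) / (r : ℝ) ^ 2) := by
  subst hN hp
  have hr' : (2 : ℝ) ≤ r := by exact_mod_cast hr
  rw [Nat.card_eq_fintype_card, Fintype.card_subtype, ← filter_filter, ← powerset_univ,
    ← powersetCard_eq_filter]
  rcases lt_or_ge n r with hnr | hrn
  · have hnr' : (n : ℝ) + 1 ≤ r := by exact_mod_cast hnr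
    refine lt_of_le_of_lt ?_
      (one_lt_exp_iff.2 (div_pos (by nlinarith [sq_pos_of_pos hε]) (by positivity)))
    rw [div_le_one (by exact_mod_cast Nat.choose_pos hn)]
    exact_mod_cast (card_filter_le _ _).trans (by rw [card_powersetCard, card_univ])
  · refine (RandomSubset.card_filter_card_edges_le_div_le hE (by omega) hrn hn hε.le).trans_lt
      (exp_lt_exp.2 ?_)
    rw [div_lt_div_iff_of_pos_right (by positivity)]
    nlinarith [sq_pos_of_pos hε]

/-- **Concentration of the edge count of a random induced subhypergraph.**
Let `r ≥ 2` and let `H = (V,E)` be an `r`-uniform hypergraph on `N` vertices with edge density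
`p = |E|/C(N,r)`. If `S` is a uniformly random `n`-subset of `V` (with `n ≤ N`), then for every
`0 < ε < p` the probability that `e(H[S]) ≤ (p−ε)·C(n,r)` is strictly less than
`exp(−2ε²(n − 2(r−1))/r²)`. The probability is expressed as the proportion of `n`-subsets. -/
theorem stmt14 (r : ℕ) (hr : 2 ≤ r) (V : Type) [Fintype V] [DecidableEq V]
    (E : Finset (Finset V)) (hE : ∀ e ∈ E, e.card = r)
    (N : ℕ) (hN : Fintype.card V = N)
    (p : ℝ) (hp : p = (E.card : ℝ) / (N.choose r : ℝ))
    (n : ℕ) (hn : n ≤ N) (ε : ℝ) (hε : 0 < ε) (hεp : ε < p) :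
    (Nat.card {S : Finset V // S.card = n ∧
        ((E.filter (· ⊆ S)).card : ℝ) ≤ (p - ε) * (n.choose r : ℝ)} : ℝ) /
        (N.choose n : ℝ) <
      Real.exp (-2 * ε ^ 2 * ((n : ℝ) - 2 * ((r : ℝ) - 1)) / (r : ℝ) ^ 2) :=
  stmt14_general r hr V E hE N hN p hp n hn ε hε
end
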